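/- Let G and H be finite simple graphs with χ_v(G) = χ_v(H). Suppose M ⊗ J + J ⊗ N is the Gram matrix of an optimal vector coloring of G × H, where M and N are positive semidefinite real matrices indexed by V(G) and V(H) respectively and J denotes an all-ones matrix of the appropriate size. Then there exist α, β ≥ 0 with α + β = 1 and Gram matrices M' and N' of optimal vector colorings of G and H respectively such that M ⊗ J + J ⊗ N = α(M' ⊗ J) + β(J ⊗ N'). -/

import Mathlib

open Matrix Kronecker

noncomputable section VectorColoring

variable {V α β : Type*}

/-- A vector `t`-coloring of a graph `G`: vectors `p i` with `p i ⬝ᵥ p i = t - 1`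
and `p i ⬝ᵥ p j ≤ -1` on edges. -/
def IsVecColoring [Fintype V] (G : SimpleGraph V) (t : ℝ) {d : ℕ}
    (p : V → Fin d → ℝ) : Prop :=
  (∀ i, p i ⬝ᵥ p i = t - 1) ∧ ∀ i j, G.Adj i j → p i ⬝ᵥ p j ≤ -1

/-- The vector chromatic number: the least `t ≥ 1` admitting a vector `t`-coloring. -/
def vecChrom [Fintype V] (G : SimpleGraph V) : ℝ :=
  sInf {t : ℝ | 1 ≤ t ∧ ∃ (d : ℕ) (p : V → Fin d → ℝ), IsVecColoring G t p}

/-- A strict vector `t`-coloring: `p i ⬝ᵥ p j = -1` on edges. -/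
def IsStrictVecColoring [Fintype V] (G : SimpleGraph V) (t : ℝ) {d : ℕ}
    (p : V → Fin d → ℝ) : Prop :=
  (∀ i, p i ⬝ᵥ p i = t - 1) ∧ ∀ i j, G.Adj i j → p i ⬝ᵥ p j = -1

/-- The strict vector chromatic number. -/
def strictVecChrom [Fintype V] (G : SimpleGraph V) : ℝ :=
  sInf {t : ℝ | 1 ≤ t ∧ ∃ (d : ℕ) (p : V → Fin d → ℝ), IsStrictVecColoring G t p}

/-- The Gram matrix of a family of vectors. -/
def gramMat {d : ℕ} (p : V → Fin d → ℝ) : Matrix V V ℝ :=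
  Matrix.of fun i j => p i ⬝ᵥ p j

/-- `M` is the Gram matrix of an optimal vector coloring of `G`. -/
def IsOptGram [Fintype V] (G : SimpleGraph V) (M : Matrix V V ℝ) : Prop :=
  ∃ (d : ℕ) (p : V → Fin d → ℝ), IsVecColoring G (vecChrom G) p ∧ M = gramMat p

/-- `grk G = rk(G)`: the maximum rank of the Gram matrix of an optimal vector coloring. -/
def grk [Fintype V] (G : SimpleGraph V) : ℕ :=
  sSup {r : ℕ | ∃ M : Matrix V V ℝ, IsOptGram G M ∧ M.rank = r}

/-- The categorical (tensor) product of graphs. -/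
def catProd (G : SimpleGraph α) (H : SimpleGraph β) : SimpleGraph (α × β) where
  Adj x y := G.Adj x.1 y.1 ∧ H.Adj x.2 y.2
  symm := by constructor; intro x y hxy; exact ⟨hxy.1.symm, hxy.2.symm⟩
  loopless := by constructor; intro x hx; exact G.irrefl hx.1

/-- A feasible dual solution for `vecChrom G`. -/
def IsDualSol [Fintype V] (G : SimpleGraph V) (B : Matrix V V ℝ) : Prop :=
  B.PosSemidef ∧ (∀ i j, i ≠ j → ¬ G.Adj i j → B i j = 0) ∧
    (∀ i j, 0 ≤ B i j) ∧ B.trace = 1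

/-- An optimal dual solution for `vecChrom G`: feasible with objective value `vecChrom G`. -/
def IsOptDual [Fintype V] (G : SimpleGraph V) (B : Matrix V V ℝ) : Prop :=
  IsDualSol G B ∧ (∑ i, ∑ j, B i j) = vecChrom G

/-- The all-ones matrix `J`. -/
def allOnes (γ : Type*) : Matrix γ γ ℝ :=
  Matrix.of fun _ _ => 1

/-- The graph `G(B)` of a (symmetric) matrix `B`: distinct `i, j` adjacent iff `B i j ≠ 0`. -/
def matGraph (B : Matrix V V ℝ) : SimpleGraph V where
  Adj i j := i ≠ j ∧ B i j ≠ 0 ∧ B j i ≠ 0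
  symm := by constructor; intro i j hij; exact ⟨hij.1.symm, hij.2.2, hij.2.1⟩
  loopless := by constructor; intro i hi; exact hi.1 rfl

/-- The spanning subgraph `G^p` of edges tight in the vector coloring `p`. -/
def tightSub [Fintype V] (G : SimpleGraph V) {d : ℕ} (p : V → Fin d → ℝ) :
    SimpleGraph V where
  Adj i j := G.Adj i j ∧ p i ⬝ᵥ p j = -1
  symm := by
    constructor
    intro i j hij
    exact ⟨hij.1.symm, by rw [dotProduct_comm]; exact hij.2⟩
  loopless := by constructor; intro i hi; exact G.irrefl hi.1

/-- The skeleton `G^sk`: the spanning subgraph of edges tight in every optimal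
vector coloring. -/
def skeleton [Fintype V] (G : SimpleGraph V) : SimpleGraph V where
  Adj i j := G.Adj i j ∧ ∀ (d : ℕ) (p : V → Fin d → ℝ),
      IsVecColoring G (vecChrom G) p → p i ⬝ᵥ p j = -1
  symm := by
    constructor
    intro i j hij
    refine ⟨hij.1.symm, fun d p hp => ?_⟩
    rw [dotProduct_comm]
    exact hij.2 d p hp
  loopless := by constructor; intro i hi; exact G.irrefl hi.1

/-- `i` is neighborly in the vector coloring `p`: `-p i` lies in the conical hull of
the vectors of the `∼_p`-neighbours of `i`. -/
def NeighborlyIn [Fintype V] (G : SimpleGraph V) {d : ℕ} (p : V → Fin d → ℝ)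
    (i : V) : Prop :=
  ∃ c : V → ℝ, (∀ j, 0 ≤ c j) ∧ (∀ j, c j ≠ 0 → G.Adj i j ∧ p i ⬝ᵥ p j = -1) ∧
    -p i = ∑ j, c j • p j

/-- `i` is neighborly: neighborly in every optimal vector coloring. -/
def Neighborly [Fintype V] (G : SimpleGraph V) (i : V) : Prop :=
  ∀ (d : ℕ) (p : V → Fin d → ℝ), IsVecColoring G (vecChrom G) p → NeighborlyIn G p i

/-- `i →_p j`: `-p i = ∑ α_l • p l` over `∼_p`-neighbours `l` of `i`, with `α_j > 0`. -/
def ArrowIn [Fintype V] (G : SimpleGraph V) {d : ℕ} (p : V → Fin d → ℝ)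
    (i j : V) : Prop :=
  ∃ c : V → ℝ, (∀ l, 0 ≤ c l) ∧ (∀ l, c l ≠ 0 → G.Adj i l ∧ p i ⬝ᵥ p l = -1) ∧
    0 < c j ∧ -p i = ∑ l, c l • p l

/-- `μ` is an eigenvalue of `M`. -/
def IsEigenvalue [Fintype V] (M : Matrix V V ℝ) (μ : ℝ) : Prop :=
  ∃ v : V → ℝ, v ≠ 0 ∧ M *ᵥ v = μ • v

/-- `lam` is the largest eigenvalue of `M`. -/
def IsMaxEigenvalue [Fintype V] (M : Matrix V V ℝ) (lam : ℝ) : Prop :=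
  IsGreatest {μ : ℝ | IsEigenvalue M μ} lam

/-- `lam` is the smallest eigenvalue of `M`. -/
def IsMinEigenvalue [Fintype V] (M : Matrix V V ℝ) (lam : ℝ) : Prop :=
  IsLeast {μ : ℝ | IsEigenvalue M μ} lam

/-- The eigenspace of `M` for `μ`. -/
def eigSpace [Fintype V] (M : Matrix V V ℝ) (μ : ℝ) : Submodule ℝ (V → ℝ) :=
  LinearMap.ker (M.mulVecLin - μ • (LinearMap.id : (V → ℝ) →ₗ[ℝ] V → ℝ))

/-- `W` is (the Gram matrix of) a convex combination of vector colorings of `G × H`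
induced by `G` and by `H`: `W = a • (M ⊗ J) + b • (J ⊗ N)`. -/
def IsConvexCombInduced [Fintype α] [Fintype β] (G : SimpleGraph α) (H : SimpleGraph β)
    (W : Matrix (α × β) (α × β) ℝ) : Prop :=
  ∃ (a b : ℝ) (M : Matrix α α ℝ) (N : Matrix β β ℝ),
    0 ≤ a ∧ 0 ≤ b ∧ a + b = 1 ∧ IsOptGram G M ∧ IsOptGram H N ∧
    W = a • (M ⊗ₖ allOnes β) + b • (allOnes α ⊗ₖ N)

end VectorColoring

/-!
Entrywise, the Gram matrix reads `M i j + N l k`. Its diagonal forces `M` and `N` to have constant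
diagonals `m` and `n` with `m + n = t - 1`, where `t = χ_v(G × H) ≤ min (χ_v G) (χ_v H)`, and its
edge condition says `M i j + N l k ≤ -1` whenever `i ∼ j` and `l ∼ k`. If some edge of `G` had
`(t - 1) M i j > -m`, every edge of `H` would satisfy `N l k ≤ -(1 + M i j)`, and rescaling `N`
would give a vector coloring of `H` with value below `t`. Hence `((t - 1) / m) M` is a vector
`t`-coloring of `G`, so `χ_v G = t` and it is optimal; symmetrically for `H`, and the weights are
`m / (t - 1)` and `n / (t - 1)`. Degenerate cases (`m = 0`, `t = 1`) only need some optimal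
coloring to exist, which follows from compactness of the bounded vector colorings in dimension
`|V|`.
-/

section

variable {V W : Type*} [Fintype V] [Fintype W] {G : SimpleGraph V}

lemma Matrix.PosSemidef.eq_zero_of_diag_eq_zero {M : Matrix V V ℝ}
    (hM : M.PosSemidef) (h : ∀ i, M i i = 0) : M = 0 :=
  hM.trace_eq_zero_iff.mp (Finset.sum_eq_zero fun i _ => h i)

lemma posSemidef_gramMat {d : ℕ} (p : V → Fin d → ℝ) : (gramMat p).PosSemidef := by
  have h : gramMat p = (of fun k i => p i k)ᴴ * of fun (k : Fin d) i => p i k := by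
    ext i j
    simp [gramMat, mul_apply, dotProduct]
  exact h ▸ posSemidef_conjTranspose_mul_self _

lemma Matrix.PosSemidef.exists_eq_gramMat {M : Matrix V V ℝ} (hM : M.PosSemidef) :
    ∃ p : V → Fin (Fintype.card V) → ℝ, M = gramMat p := by
  obtain ⟨B, rfl⟩ : ∃ B : Matrix V V ℝ, M = star B * B := by
    classical
    open scoped MatrixOrder in exact CStarAlgebra.nonneg_iff_eq_star_mul_self.mp hM.nonneg
  let e := Fintype.equivFin V
  refine ⟨fun i k => B (e.symm k) i, ?_⟩
  ext i j
  simpa [gramMat, dotProduct, mul_apply] using (e.symm.sum_comp fun v => B v i * B v j).symm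

lemma exists_isVecColoring_of_posSemidef {M : Matrix V V ℝ} {t : ℝ} (hM : M.PosSemidef)
    (hdiag : ∀ i, M i i = t - 1) (hadj : ∀ i j, G.Adj i j → M i j ≤ -1) :
    ∃ p : V → Fin (Fintype.card V) → ℝ, IsVecColoring G t p ∧ M = gramMat p := by
  obtain ⟨p, rfl⟩ := hM.exists_eq_gramMat
  exact ⟨p, ⟨hdiag, hadj⟩, rfl⟩

lemma IsVecColoring.exists_card {t : ℝ} {d : ℕ} {p : V → Fin d → ℝ} (hp : IsVecColoring G t p) :
    ∃ p' : V → Fin (Fintype.card V) → ℝ, IsVecColoring G t p' :=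
  let ⟨p', hp', _⟩ := exists_isVecColoring_of_posSemidef (posSemidef_gramMat p) hp.1 hp.2
  ⟨p', hp'⟩

variable (G) in
lemma exists_isVecColoring :
    ∃ t : ℝ, 1 ≤ t ∧ ∃ (d : ℕ) (p : V → Fin d → ℝ), IsVecColoring G t p := by
  set n : ℝ := (Fintype.card V : ℝ)
  let p : V → Fin (Fintype.card V) → ℝ := fun i => Pi.single (Fintype.equivFin V i) (n + 2) - 1
  refine ⟨n ^ 2 + 3 * n + 1, le_add_of_nonneg_left (by positivity), _, p,
    fun i => ?_, fun i j hij => ?_⟩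
  · simp [p, sub_dotProduct, dotProduct_sub, n]
    ring
  · simp [p, sub_dotProduct, dotProduct_sub, hij.ne', n]
    linarith [show 0 ≤ n by positivity]

lemma vecChrom_le {t : ℝ} (ht : 1 ≤ t) {d : ℕ} {p : V → Fin d → ℝ} (hp : IsVecColoring G t p) :
    vecChrom G ≤ t :=
  csInf_le ⟨1, fun _ hs => hs.1⟩ ⟨ht, d, p, hp⟩

variable (G) in
lemma one_le_vecChrom : 1 ≤ vecChrom G :=
  le_csInf (exists_isVecColoring G) fun _ hs => hs.1

lemma IsVecColoring.sq_apply_le {t : ℝ} {d : ℕ} {p : V → Fin d → ℝ} (hp : IsVecColoring G t p)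
    (i : V) (k : Fin d) : p i k ^ 2 ≤ t - 1 :=
  (sq (p i k)).trans_le <| hp.1 i ▸
    Finset.single_le_sum (fun k _ => mul_self_nonneg (p i k)) (Finset.mem_univ k)

variable (G) in
lemma isClosed_setOf_isVecColoring (d : ℕ) :
    IsClosed {x : ℝ × (V → Fin d → ℝ) | IsVecColoring G x.1 x.2} := by
  have hdot : ∀ i j, Continuous fun x : ℝ × (V → Fin d → ℝ) => x.2 i ⬝ᵥ x.2 j := fun i j =>
    ((continuous_apply i).comp continuous_snd).dotProduct ((continuous_apply j).comp continuous_snd)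
  simp only [IsVecColoring, Set.ofPred_and, Set.ofPred_forall]
  exact (isClosed_iInter fun i => isClosed_eq (hdot i i) (continuous_fst.sub continuous_const))
    |>.inter (isClosed_iInter fun i => isClosed_iInter fun j => isClosed_iInter fun _ =>
      isClosed_le (hdot i j) continuous_const)

variable (G) in
lemma isCompact_setOf_isVecColoring (d : ℕ) (T : ℝ) :
    IsCompact {x : ℝ × (V → Fin d → ℝ) | x.1 ∈ Set.Icc 1 T ∧ IsVecColoring G x.1 x.2} := by
  refine IsCompact.of_isClosed_subset (isCompact_Icc (a := ((1 : ℝ), fun _ _ => -T))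
      (b := (T, fun _ _ => T)))
    ((isClosed_Icc.preimage continuous_fst).inter (isClosed_setOf_isVecColoring G d))
    fun x ⟨⟨h1, hT⟩, hx⟩ => ⟨⟨h1, fun i k => ?_⟩, ⟨hT, fun i k => ?_⟩⟩
  all_goals nlinarith [hx.sq_apply_le i k]

variable (G) in
lemma exists_isVecColoring_vecChrom :
    ∃ p : V → Fin (Fintype.card V) → ℝ, IsVecColoring G (vecChrom G) p := by
  obtain ⟨T, hT, d, p₀, hp₀⟩ := exists_isVecColoring G
  obtain ⟨p₁, hp₁⟩ := hp₀.exists_card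
  obtain ⟨x, ⟨⟨hx1, hxT⟩, hx⟩, hmin⟩ := (isCompact_setOf_isVecColoring G _ T).exists_isMinOn
    ⟨(T, p₁), ⟨hT, le_rfl⟩, hp₁⟩ continuous_fst.continuousOn
  suffices x.1 = vecChrom G from ⟨x.2, this ▸ hx⟩
  refine le_antisymm (le_csInf ⟨T, hT, d, p₀, hp₀⟩ ?_) (vecChrom_le hx1 hx)
  rintro s ⟨hs, _, p, hp⟩
  rcases le_or_gt s T with hsT | hTs
  · obtain ⟨p', hp'⟩ := hp.exists_card
    exact hmin (show (s, p') ∈ _ from ⟨⟨hs, hsT⟩, hp'⟩)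
  · exact hxT.trans hTs.le

variable (G) in
lemma exists_isOptGram : ∃ M, IsOptGram G M :=
  let ⟨p, hp⟩ := exists_isVecColoring_vecChrom G
  ⟨gramMat p, _, p, hp, rfl⟩

lemma IsVecColoring.comap {G' : SimpleGraph W} {t : ℝ} {d : ℕ} {p : V → Fin d → ℝ}
    (hp : IsVecColoring G t p) (f : G' →g G) : IsVecColoring G' t (p ∘ f) :=
  ⟨fun i => hp.1 (f i), fun _ _ hij => hp.2 _ _ (f.map_adj hij)⟩

lemma vecChrom_le_of_hom {G' : SimpleGraph W} (f : G' →g G) : vecChrom G' ≤ vecChrom G :=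
  let ⟨_, hp⟩ := exists_isVecColoring_vecChrom G
  vecChrom_le (one_le_vecChrom G) (hp.comap f)

lemma IsVecColoring.two_le {t : ℝ} {d : ℕ} {p : V → Fin d → ℝ} (hp : IsVecColoring G t p)
    {i j : V} (hij : G.Adj i j) : 2 ≤ t := by
  have h := dotProduct_self_star_nonneg (p i + p j)
  simp only [star_trivial, add_dotProduct, dotProduct_add, dotProduct_comm (p j) (p i),
    hp.1] at h
  linarith [hp.2 i j hij]

lemma two_le_vecChrom {i j : V} (hij : G.Adj i j) : 2 ≤ vecChrom G :=
  let ⟨_, hp⟩ := exists_isVecColoring_vecChrom G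
  hp.two_le hij

lemma isOptGram_of_posSemidef {M : Matrix V V ℝ} {t : ℝ} (hM : M.PosSemidef)
    (hdiag : ∀ i, M i i = t - 1) (hadj : ∀ i j, G.Adj i j → M i j ≤ -1) (ht : 1 ≤ t)
    (htG : t ≤ vecChrom G) : IsOptGram G M := by
  obtain ⟨p, hp, rfl⟩ := exists_isVecColoring_of_posSemidef hM hdiag hadj
  exact ⟨_, p, le_antisymm (vecChrom_le ht hp) htG ▸ hp, rfl⟩

lemma isOptGram_bot : IsOptGram (⊥ : SimpleGraph V) 0 :=
  isOptGram_of_posSemidef .zero (fun _ => (sub_self 1).symm) (fun _ _ h => h.elim) le_rfl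
    (one_le_vecChrom _)

lemma vecChrom_sub_one_mul_le {N : Matrix V V ℝ} (hN : N.PosSemidef) {n c : ℝ}
    (hn : ∀ i, N i i = n) (hn0 : 0 ≤ n) (hc : ∀ i j, G.Adj i j → N i j ≤ -c) :
    (vecChrom G - 1) * c ≤ n := by
  rcases le_or_gt c 0 with hc0 | hc0
  · nlinarith [one_le_vecChrom G]
  obtain ⟨p, hp, -⟩ := exists_isVecColoring_of_posSemidef (G := G) (t := 1 + n / c)
    (hN.smul (inv_nonneg.mpr hc0.le)) (fun i => by simp [hn, div_eq_inv_mul])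
    (fun i j hij => by
      rw [Matrix.smul_apply, smul_eq_mul, inv_mul_le_iff₀ hc0]
      linarith [hc i j hij])
  have h := vecChrom_le (le_add_of_nonneg_right (by positivity)) hp
  rw [← le_div_iff₀ hc0]
  linarith

lemma exists_isOptGram_smul_eq {H : SimpleGraph W} {M : Matrix V V ℝ} {N : Matrix W W ℝ}
    (hM : M.PosSemidef) (hN : N.PosSemidef) {m n t : ℝ} (ht : 1 < t) (hmn : m + n = t - 1)
    (hm : ∀ i, M i i = m) (hn : ∀ l, N l l = n) (hm0 : 0 ≤ m) (hn0 : 0 ≤ n)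
    (htG : t ≤ vecChrom G) (htH : t ≤ vecChrom H)
    (hadj : ∀ i j l k, G.Adj i j → H.Adj l k → M i j + N l k ≤ -1) :
    ∃ M', IsOptGram G M' ∧ (m / (t - 1)) • M' = M := by
  rcases hm0.eq_or_lt with rfl | hm0
  · obtain ⟨M', hM'⟩ := exists_isOptGram G
    exact ⟨M', hM', by rw [zero_div, zero_smul, hM.eq_zero_of_diag_eq_zero hm]⟩
  have hedge : ∀ i j, G.Adj i j → (t - 1) * M i j ≤ -m := fun i j hij => by
    have h := vecChrom_sub_one_mul_le hN hn hn0 (c := 1 + M i j)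
      fun l k hlk => by linarith [hadj i j l k hij hlk]
    rcases le_or_gt 0 (1 + M i j) with hc | hc
    · nlinarith [mul_le_mul_of_nonneg_right (sub_le_sub_right htH 1) hc]
    · nlinarith
  refine ⟨((t - 1) / m) • M, isOptGram_of_posSemidef (hM.smul (by positivity))
    (fun i => ?_) (fun i j hij => ?_) ht.le htG, ?_⟩
  · rw [Matrix.smul_apply, hm, smul_eq_mul, div_mul_cancel₀ _ hm0.ne']
  · rw [Matrix.smul_apply, smul_eq_mul, div_mul_eq_mul_div, div_le_iff₀ hm0]
    linarith [hedge i j hij]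
  · rw [smul_smul, div_mul_div_cancel₀ (by linarith), div_self hm0.ne', one_smul]

lemma sum_kron_apply_of_isOptGram {H : SimpleGraph W} {M : Matrix V V ℝ} {N : Matrix W W ℝ}
    (hopt : IsOptGram (catProd G H) (M ⊗ₖ allOnes W + allOnes V ⊗ₖ N)) :
    (∀ i l, M i i + N l l = vecChrom (catProd G H) - 1) ∧
      ∀ i j l k, G.Adj i j → H.Adj l k → M i j + N l k ≤ -1 := by
  obtain ⟨d, q, hq, hWq⟩ := hopt
  have hq_apply : ∀ i l j k, M i j + N l k = q (i, l) ⬝ᵥ q (j, k) := fun i l j k => by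
    simpa [allOnes, gramMat] using congrFun (congrFun hWq (i, l)) (j, k)
  exact ⟨fun i l => (hq_apply i l i l).trans (hq.1 (i, l)), fun i j l k hij hlk =>
    (hq_apply i l j k).trans_le (hq.2 _ _ ⟨hij, hlk⟩)⟩

lemma isConvexCombInduced_zero (G : SimpleGraph V) (H : SimpleGraph W)
    (h : vecChrom (catProd G H) = 1) : IsConvexCombInduced G H 0 := by
  by_cases hG : G = ⊥
  · obtain ⟨N', hN'⟩ := exists_isOptGram H
    exact ⟨1, 0, 0, N', zero_le_one, le_rfl, add_zero 1, hG ▸ isOptGram_bot, hN', by simp⟩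
  obtain ⟨i, j, hij⟩ : ∃ i j, G.Adj i j := by
    simpa [SimpleGraph.eq_bot_iff_forall_not_adj] using hG
  have hH : H = ⊥ := SimpleGraph.eq_bot_iff_forall_not_adj.mpr fun l k hlk => by
    linarith [two_le_vecChrom (show (catProd G H).Adj (i, l) (j, k) from ⟨hij, hlk⟩)]
  obtain ⟨M', hM'⟩ := exists_isOptGram G
  exact ⟨0, 1, M', 0, le_rfl, zero_le_one, zero_add 1, hM', hH ▸ isOptGram_bot, by simp⟩

end

theorem sum_kron_is_convex_comb_general {α β : Type*} [Fintype α] [Fintype β]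
    (G : SimpleGraph α) (H : SimpleGraph β)
    (M : Matrix α α ℝ) (N : Matrix β β ℝ) (hM : M.PosSemidef) (hN : N.PosSemidef)
    (hopt : IsOptGram (catProd G H) (M ⊗ₖ allOnes β + allOnes α ⊗ₖ N)) :
    IsConvexCombInduced G H (M ⊗ₖ allOnes β + allOnes α ⊗ₖ N) := by
  rcases isEmpty_or_nonempty (α × β) with hαβ | ⟨i₀, l₀⟩
  · obtain ⟨M', hM'⟩ := exists_isOptGram G
    obtain ⟨N', hN'⟩ := exists_isOptGram H
    exact ⟨1, 0, M', N', zero_le_one, le_rfl, add_zero 1, hM', hN', funext isEmptyElim⟩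
  obtain ⟨hdiag, hadj⟩ := sum_kron_apply_of_isOptGram hopt
  set t := vecChrom (catProd G H)
  obtain ⟨m, hm⟩ : ∃ m, ∀ i, M i i = m :=
    ⟨M i₀ i₀, fun i => by linarith [hdiag i l₀, hdiag i₀ l₀]⟩
  obtain ⟨n, hn⟩ : ∃ n, ∀ l, N l l = n :=
    ⟨N l₀ l₀, fun l => by linarith [hdiag i₀ l, hdiag i₀ l₀]⟩
  have hmn : m + n = t - 1 := hm i₀ ▸ hn l₀ ▸ hdiag i₀ l₀
  have hm0 : 0 ≤ m := hm i₀ ▸ hM.diag_nonneg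
  have hn0 : 0 ≤ n := hn l₀ ▸ hN.diag_nonneg
  have htG : t ≤ vecChrom G := vecChrom_le_of_hom ⟨Prod.fst, And.left⟩
  have htH : t ≤ vecChrom H := vecChrom_le_of_hom ⟨Prod.snd, And.right⟩
  rcases (one_le_vecChrom (catProd G H)).eq_or_lt with ht | ht
  · rw [hM.eq_zero_of_diag_eq_zero fun i => by linarith [hm i],
      hN.eq_zero_of_diag_eq_zero fun l => by linarith [hn l]]
    simpa using isConvexCombInduced_zero G H ht.symm
  obtain ⟨M', hM', rfl⟩ := exists_isOptGram_smul_eq hM hN ht hmn hm hn hm0 hn0 htG htH hadj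
  obtain ⟨N', hN', rfl⟩ := exists_isOptGram_smul_eq hN hM ht ((add_comm n m).trans hmn) hn hm
    hn0 hm0 htH htG fun l k i j hlk hij => (add_comm _ _).trans_le (hadj i j l k hij hlk)
  refine ⟨m / (t - 1), n / (t - 1), M', N', div_nonneg hm0 (by linarith),
    div_nonneg hn0 (by linarith), ?_, hM', hN', by rw [smul_kronecker, kronecker_smul]⟩
  rw [← add_div, hmn, div_self (by linarith)]

/-- If `χ_v(G) = χ_v(H)` and `M ⊗ J + J ⊗ N` with `M, N ⪰ 0` is the
Gram matrix of an optimal vector coloring of `G × H`, then it is a convex combination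
`α (M' ⊗ J) + β (J ⊗ N')` of Gram matrices of optimal vector colorings of the factors. -/
theorem sum_kron_is_convex_comb {α β : Type*} [Fintype α] [Fintype β]
    (G : SimpleGraph α) (H : SimpleGraph β) (h : vecChrom G = vecChrom H)
    (M : Matrix α α ℝ) (N : Matrix β β ℝ) (hM : M.PosSemidef) (hN : N.PosSemidef)
    (hopt : IsOptGram (catProd G H) (M ⊗ₖ allOnes β + allOnes α ⊗ₖ N)) :
    IsConvexCombInduced G H (M ⊗ₖ allOnes β + allOnes α ⊗ₖ N) :=
  sum_kron_is_convex_comb_general G H M N hM hN hopt
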